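/- arXiv:1611.00755 — 2 statements merged into one kernel-verified Lean document; each statement's English description precedes it below -/
import Mathlib

section
/- Let M be an n×n real matrix such that ‖M‖₂ ≤ 1. For α ∈ [0,1) let N = αI + (1−α)M, and let L_i = I − U_{N^i} where U_X = (X + Xᵀ)/2. Then 2α·L₁ ⪯ L₂ ⪯ (4 − 2α)·L₁ in the positive semidefinite order. -/
open Matrix

/-- The spectral (ℓ₂ operator) norm of a real matrix. -/
noncomputable def sNorm {m n : ℕ} (M : Matrix (Fin m) (Fin n) ℝ) : ℝ :=
  ‖LinearMap.toContinuousLinearMap (Matrix.toEuclideanLin M)‖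

/-- The symmetrization U_X = (X + Xᵀ)/2. -/
noncomputable def symmPart {n : ℕ} (A : Matrix (Fin n) (Fin n) ℝ) : Matrix (Fin n) (Fin n) ℝ :=
  (2⁻¹ : ℝ) • (A + Aᵀ)

lemma dp_self_nonneg {n : ℕ} (v : Fin n → ℝ) : 0 ≤ v ⬝ᵥ v :=
  Finset.sum_nonneg fun i _ => mul_self_nonneg (v i)

lemma sNorm_transpose {n : ℕ} (M : Matrix (Fin n) (Fin n) ℝ) : sNorm Mᵀ = sNorm M := by
  unfold sNorm
  rw [← Matrix.conjTranspose_eq_transpose_of_trivial,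
    Matrix.toEuclideanLin_conjTranspose_eq_adjoint,
    LinearMap.adjoint_toContinuousLinearMap]
  exact (ContinuousLinearMap.adjoint).norm_map _

lemma mulVec_dot_le {n : ℕ} (M : Matrix (Fin n) (Fin n) ℝ) (h : sNorm M ≤ 1)
    (x : Fin n → ℝ) : (M *ᵥ x) ⬝ᵥ (M *ᵥ x) ≤ x ⬝ᵥ x := by
  set T := LinearMap.toContinuousLinearMap (Matrix.toEuclideanLin M) with hT
  set sx : EuclideanSpace ℝ (Fin n) := (WithLp.equiv 2 (Fin n → ℝ)).symm x with hsx
  have hx : T sx = (WithLp.equiv 2 (Fin n → ℝ)).symm (M *ᵥ x) := by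
    simp [hT, hsx]
  have hnorm2 : ∀ y : Fin n → ℝ,
      ‖(WithLp.equiv 2 (Fin n → ℝ)).symm y‖ ^ 2 = y ⬝ᵥ y := by
    intro y
    rw [EuclideanSpace.norm_eq, Real.sq_sqrt (Finset.sum_nonneg fun i _ => sq_nonneg _)]
    simp [dotProduct, sq]
  have hb : ‖T sx‖ ≤ ‖sx‖ := by
    calc ‖T sx‖ ≤ ‖T‖ * ‖sx‖ := T.le_opNorm sx
    _ ≤ 1 * ‖sx‖ := by
        have := norm_nonneg sx
        exact mul_le_mul_of_nonneg_right h this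
    _ = ‖sx‖ := one_mul _
  have hsq : ‖T sx‖ ^ 2 ≤ ‖sx‖ ^ 2 :=
    pow_le_pow_left₀ (norm_nonneg _) hb 2
  rwa [hx, hnorm2, hnorm2] at hsq

/-- For ‖M‖₂ ≤ 1, α ∈ [0,1), N = αI + (1−α)M, L_i = I − U_{N^i}:
    2α·L₁ ⪯ L₂ ⪯ (4 − 2α)·L₁. -/
theorem stmt3 {n : ℕ} (M : Matrix (Fin n) (Fin n) ℝ) (hnorm : sNorm M ≤ 1)
    (α : ℝ) (hα0 : 0 ≤ α) (hα1 : α < 1)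
    (N L₁ L₂ : Matrix (Fin n) (Fin n) ℝ)
    (hN : N = α • (1 : Matrix (Fin n) (Fin n) ℝ) + (1 - α) • M)
    (hL₁ : L₁ = (1 : Matrix (Fin n) (Fin n) ℝ) - symmPart N)
    (hL₂ : L₂ = (1 : Matrix (Fin n) (Fin n) ℝ) - symmPart (N ^ 2)) :
    (L₂ - (2 * α) • L₁).PosSemidef ∧ ((4 - 2 * α) • L₁ - L₂).PosSemidef := by
  -- symmetry of L₁ and L₂
  have hsymm : ∀ A : Matrix (Fin n) (Fin n) ℝ,
      ((1 : Matrix (Fin n) (Fin n) ℝ) - symmPart A).IsHermitian := by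
    intro A
    unfold Matrix.IsHermitian symmPart
    rw [Matrix.conjTranspose_eq_transpose_of_trivial]
    simp [Matrix.transpose_add, Matrix.transpose_smul, add_comm]
  have hsmul : ∀ (c : ℝ) (A : Matrix (Fin n) (Fin n) ℝ), A.IsHermitian → (c • A).IsHermitian := by
    intro c A hA
    unfold Matrix.IsHermitian at *
    rw [Matrix.conjTranspose_smul, hA]
    simp
  have hherm1 : (L₂ - (2 * α) • L₁).IsHermitian := by
    rw [hL₁, hL₂]
    exact (hsymm (N ^ 2)).sub (hsmul _ _ (hsymm N))
  have hherm2 : ((4 - 2 * α) • L₁ - L₂).IsHermitian := by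
    rw [hL₁, hL₂]
    exact (hsmul _ _ (hsymm N)).sub (hsymm (N ^ 2))
  -- expansion of N²
  have hN2 : N ^ 2 = (α ^ 2) • (1 : Matrix (Fin n) (Fin n) ℝ)
      + (2 * α * (1 - α)) • M + ((1 - α) ^ 2) • (M * M) := by
    rw [hN, sq]
    rw [add_mul, mul_add, mul_add]
    simp only [Matrix.smul_mul, Matrix.mul_smul, Matrix.one_mul, Matrix.mul_one, smul_smul]
    module
  -- pointwise quadratic forms
  have hvT : ∀ x : Fin n → ℝ, ∀ A : Matrix (Fin n) (Fin n) ℝ,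
      x ⬝ᵥ (Aᵀ *ᵥ x) = x ⬝ᵥ (A *ᵥ x) := by
    intro x A
    rw [Matrix.dotProduct_mulVec, Matrix.vecMul_transpose, dotProduct_comm]
  have quad : ∀ x : Fin n → ℝ,
      x ⬝ᵥ (L₁ *ᵥ x) = (1 - α) * (x ⬝ᵥ x) - (1 - α) * (x ⬝ᵥ (M *ᵥ x)) ∧
      x ⬝ᵥ (L₂ *ᵥ x) = (1 - α ^ 2) * (x ⬝ᵥ x) - (2 * α * (1 - α)) * (x ⬝ᵥ (M *ᵥ x))
        - (1 - α) ^ 2 * (x ⬝ᵥ ((M * M) *ᵥ x)) := by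
    intro x
    constructor
    · rw [hL₁, hN]
      simp only [symmPart, Matrix.sub_mulVec, Matrix.add_mulVec, Matrix.smul_mulVec,
        Matrix.one_mulVec, Matrix.transpose_add, Matrix.transpose_smul, Matrix.transpose_one,
        dotProduct_sub, dotProduct_add, dotProduct_smul, smul_eq_mul,
        hvT x]
      ring
    · rw [hL₂, hN2]
      simp only [symmPart, Matrix.sub_mulVec, Matrix.add_mulVec, Matrix.smul_mulVec,
        Matrix.one_mulVec, Matrix.transpose_add, Matrix.transpose_smul, Matrix.transpose_one,
        dotProduct_sub, dotProduct_add, dotProduct_smul, smul_eq_mul,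
        hvT x]
      ring
  -- key analytic facts per vector
  have hMT : sNorm Mᵀ ≤ 1 := by rwa [sNorm_transpose]
  have main : ∀ x : Fin n → ℝ,
      (1 - α) ^ 2 * ((x ⬝ᵥ x) - (x ⬝ᵥ ((M * M) *ᵥ x))) ≥ 0 ∧
      (1 - α) ^ 2 * (3 * (x ⬝ᵥ x) - 4 * (x ⬝ᵥ (M *ᵥ x)) + (x ⬝ᵥ ((M * M) *ᵥ x))) ≥ 0 := by
    intro x
    set u : Fin n → ℝ := M *ᵥ x with hu
    set v : Fin n → ℝ := Mᵀ *ᵥ x with hv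
    have hd : x ⬝ᵥ ((M * M) *ᵥ x) = v ⬝ᵥ u := by
      rw [hu, hv, ← Matrix.mulVec_mulVec, Matrix.dotProduct_mulVec,
        ← Matrix.mulVec_transpose]
    have hbu : x ⬝ᵥ u = u ⬝ᵥ x := dotProduct_comm _ _
    have hbv : x ⬝ᵥ v = x ⬝ᵥ u := hvT x M
    have huu : u ⬝ᵥ u ≤ x ⬝ᵥ x := mulVec_dot_le M hnorm x
    have hvv : v ⬝ᵥ v ≤ x ⬝ᵥ x := mulVec_dot_le Mᵀ hMT x
    have huv : u ⬝ᵥ v = v ⬝ᵥ u := dotProduct_comm _ _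
    have e1 : (u - v) ⬝ᵥ (u - v) = u ⬝ᵥ u - 2 * (v ⬝ᵥ u) + v ⬝ᵥ v := by
      simp only [dotProduct_sub, sub_dotProduct, huv]
      ring
    have e1p : 0 ≤ (u - v) ⬝ᵥ (u - v) := dp_self_nonneg _
    have e2 : (x + x - u - v) ⬝ᵥ (x + x - u - v)
        = 4 * (x ⬝ᵥ x) - 8 * (x ⬝ᵥ u) + u ⬝ᵥ u + 2 * (v ⬝ᵥ u) + v ⬝ᵥ v := by
      simp only [dotProduct_sub, sub_dotProduct, dotProduct_add,
        add_dotProduct, huv]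
      have h1 : u ⬝ᵥ x = x ⬝ᵥ u := dotProduct_comm _ _
      have h2 : v ⬝ᵥ x = x ⬝ᵥ u := by rw [dotProduct_comm]; exact hbv
      rw [h1, h2, hbv]
      ring
    have e2p : 0 ≤ (x + x - u - v) ⬝ᵥ (x + x - u - v) := dp_self_nonneg _
    have hs : (0:ℝ) ≤ (1 - α) ^ 2 := sq_nonneg _
    constructor
    · rw [hd]
      have : x ⬝ᵥ x - v ⬝ᵥ u ≥ 0 := by nlinarith [e1, e1p]
      exact mul_nonneg hs this
    · rw [hd]
      have : 3 * (x ⬝ᵥ x) - 4 * (x ⬝ᵥ u) + v ⬝ᵥ u ≥ 0 := by nlinarith [e2, e2p]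
      exact mul_nonneg hs this
  have hstar : ∀ x : Fin n → ℝ, star x = x := fun x => funext fun i => by simp
  refine ⟨posSemidef_iff_dotProduct_mulVec.mpr ⟨hherm1, ?_⟩, posSemidef_iff_dotProduct_mulVec.mpr ⟨hherm2, ?_⟩⟩
  · intro x
    rw [hstar x]
    obtain ⟨q1, q2⟩ := quad x
    have expand : x ⬝ᵥ ((L₂ - (2 * α) • L₁) *ᵥ x)
        = x ⬝ᵥ (L₂ *ᵥ x) - 2 * α * (x ⬝ᵥ (L₁ *ᵥ x)) := by
      simp only [Matrix.sub_mulVec, Matrix.smul_mulVec, dotProduct_sub,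
        dotProduct_smul, smul_eq_mul]
    have hval : x ⬝ᵥ ((L₂ - (2 * α) • L₁) *ᵥ x)
        = (1 - α) ^ 2 * ((x ⬝ᵥ x) - (x ⬝ᵥ ((M * M) *ᵥ x))) := by
      rw [expand, q1, q2]; ring
    rw [hval]
    exact (main x).1
  · intro x
    rw [hstar x]
    obtain ⟨q1, q2⟩ := quad x
    have expand : x ⬝ᵥ (((4 - 2 * α) • L₁ - L₂) *ᵥ x)
        = (4 - 2 * α) * (x ⬝ᵥ (L₁ *ᵥ x)) - x ⬝ᵥ (L₂ *ᵥ x) := by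
      simp only [Matrix.sub_mulVec, Matrix.smul_mulVec, dotProduct_sub,
        dotProduct_smul, smul_eq_mul]
    have hval : x ⬝ᵥ (((4 - 2 * α) • L₁ - L₂) *ᵥ x)
        = (1 - α) ^ 2 * (3 * (x ⬝ᵥ x) - 4 * (x ⬝ᵥ (M *ᵥ x)) + (x ⬝ᵥ ((M * M) *ᵥ x))) := by
      rw [expand, q1, q2]; ring
    rw [hval]
    exact (main x).2
end

section
/- Suppose C is an ε-approximation of B and B is an ε-approximation of A (for matrices with PSD symmetric parts), where X̃ ε-approximates X means ker(U_X) ⊆ ker(X̃−X) ∩ ker((X̃−X)ᵀ) and ‖U_X^{†/2}(X̃−X)U_X^{†/2}‖₂ ≤ ε. Then C is an ε(2+ε)-approximation of A. -/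
open Matrix
open scoped Matrix.Norms.L2Operator

/-- `Ap` satisfies the four Moore–Penrose equations for `A`
    (these uniquely characterize the pseudoinverse). -/
def IsMoorePenrose {n : ℕ} (A Ap : Matrix (Fin n) (Fin n) ℝ) : Prop :=
  A * Ap * A = A ∧ Ap * A * Ap = Ap ∧ (A * Ap)ᵀ = A * Ap ∧ (Ap * A)ᵀ = Ap * A

/-- `At` is an ε-approximation of `A`: the symmetrization U_A is PSD,
    ker(U_A) ⊆ ker(At − A) ∩ ker((At − A)ᵀ), and ‖U_A^{†/2}(At − A)U_A^{†/2}‖₂ ≤ ε,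
    where U_A^{†/2} is expressed via the (unique) PSD square root R of U_A and
    its (unique) Moore–Penrose pseudoinverse S. -/
def IsApprox {n : ℕ} (ε : ℝ) (A At : Matrix (Fin n) (Fin n) ℝ) : Prop :=
  (symmPart A).PosSemidef ∧
  (∀ v : Fin n → ℝ, symmPart A *ᵥ v = 0 → (At - A) *ᵥ v = 0 ∧ (At - A)ᵀ *ᵥ v = 0) ∧
  (∀ R S : Matrix (Fin n) (Fin n) ℝ, R.PosSemidef → R * R = symmPart A →
    IsMoorePenrose R S → sNorm (S * (At - A) * S) ≤ ε)

lemma sNorm_eq_l2norm {m n : ℕ} (M : Matrix (Fin m) (Fin n) ℝ) : sNorm M = ‖M‖ := rfl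

lemma l2norm_transpose {n : ℕ} (M : Matrix (Fin n) (Fin n) ℝ) : ‖Mᵀ‖ = ‖M‖ := by
  rw [← conjTranspose_eq_transpose_of_trivial, l2_opNorm_conjTranspose]

lemma mulVec_ext' {n : ℕ} {M N : Matrix (Fin n) (Fin n) ℝ}
    (h : ∀ v, M *ᵥ v = N *ᵥ v) : M = N := by
  ext i j
  simpa [mulVec_single] using congrFun (h (Pi.single j 1)) i

lemma symmPart_eq_add {n : ℕ} (A B : Matrix (Fin n) (Fin n) ℝ) :
    symmPart B = symmPart A + (2⁻¹ : ℝ) • ((B - A) + (B - A)ᵀ) := by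
  simp only [symmPart, transpose_sub]
  module

lemma mp_unique {n : ℕ} {A S1 S2 : Matrix (Fin n) (Fin n) ℝ}
    (h1 : IsMoorePenrose A S1) (h2 : IsMoorePenrose A S2) : S1 = S2 := by
  obtain ⟨a1, b1, c1, d1⟩ := h1
  obtain ⟨a2, b2, c2, d2⟩ := h2
  have e1 : A * S1 = A * S2 := by
    calc A * S1 = (A * S2 * A) * S1 := by rw [a2]
    _ = (A * S2) * (A * S1) := by noncomm_ring
    _ = (A * S2)ᵀ * (A * S1)ᵀ := by rw [c1, c2]
    _ = S2ᵀ * (A * S1 * A)ᵀ := by simp only [transpose_mul]; noncomm_ring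
    _ = S2ᵀ * Aᵀ := by rw [a1]
    _ = (A * S2)ᵀ := by rw [transpose_mul]
    _ = A * S2 := c2
  have e2 : S1 * A = S2 * A := by
    calc S1 * A = S1 * (A * S2 * A) := by rw [a2]
    _ = (S1 * A) * (S2 * A) := by noncomm_ring
    _ = (S1 * A)ᵀ * (S2 * A)ᵀ := by rw [d1, d2]
    _ = (A * S1 * A)ᵀ * S2ᵀ := by simp only [transpose_mul]; noncomm_ring
    _ = Aᵀ * S2ᵀ := by rw [a1]
    _ = (S2 * A)ᵀ := by rw [transpose_mul]
    _ = S2 * A := d2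
  calc S1 = S1 * A * S1 := b1.symm
  _ = S1 * (A * S2) := by rw [← e1]; noncomm_ring
  _ = (S2 * A) * S2 := by rw [← e2]; noncomm_ring
  _ = S2 := b2

lemma mp_transpose {n : ℕ} {A S : Matrix (Fin n) (Fin n) ℝ} (hA : Aᵀ = A)
    (h : IsMoorePenrose A S) : IsMoorePenrose A Sᵀ := by
  obtain ⟨a, b, c, d⟩ := h
  refine ⟨?_, ?_, ?_, ?_⟩
  · calc A * Sᵀ * A = (Aᵀ * S * Aᵀ)ᵀ := by simp only [transpose_mul, transpose_transpose]; noncomm_ring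
    _ = A := by rw [hA, a, hA]
  · calc Sᵀ * A * Sᵀ = (S * Aᵀ * S)ᵀ := by simp only [transpose_mul, transpose_transpose]; noncomm_ring
    _ = Sᵀ := by rw [hA, b]
  · calc (A * Sᵀ)ᵀ = ((S * Aᵀ)ᵀ)ᵀ := by simp only [transpose_mul, transpose_transpose]
    _ = S * A := by rw [transpose_transpose, hA]
    _ = (S * A)ᵀ := d.symm
    _ = Aᵀ * Sᵀ := by rw [transpose_mul]
    _ = A * Sᵀ := by rw [hA]
  · calc (Sᵀ * A)ᵀ = ((Aᵀ * S)ᵀ)ᵀ := by simp only [transpose_mul, transpose_transpose]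
    _ = A * S := by rw [transpose_transpose, hA]
    _ = (A * S)ᵀ := c.symm
    _ = Sᵀ * Aᵀ := by rw [transpose_mul]
    _ = Sᵀ * A := by rw [hA]

lemma mp_symm {n : ℕ} {A S : Matrix (Fin n) (Fin n) ℝ} (hA : Aᵀ = A)
    (h : IsMoorePenrose A S) : Sᵀ = S :=
  mp_unique (mp_transpose hA h) h

lemma mp_unitary_diag {n : ℕ} (V : Matrix (Fin n) (Fin n) ℝ)
    (hV1 : star V * V = 1) (d : Fin n → ℝ) :
    IsMoorePenrose (V * diagonal d * star V) (V * diagonal (fun i => (d i)⁻¹) * star V) := by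
  have key : ∀ a b : Fin n → ℝ, (V * diagonal a * star V) * (V * diagonal b * star V)
      = V * diagonal (fun i => a i * b i) * star V := by
    intro a b
    calc (V * diagonal a * star V) * (V * diagonal b * star V)
        = V * diagonal a * (star V * V) * diagonal b * star V := by noncomm_ring
    _ = V * (diagonal a * diagonal b) * star V := by rw [hV1]; noncomm_ring
    _ = V * diagonal (fun i => a i * b i) * star V := by rw [diagonal_mul_diagonal]
  have tkey : ∀ a : Fin n → ℝ, (V * diagonal a * star V)ᵀ = V * diagonal a * star V := by
    intro a
    rw [← conjTranspose_eq_transpose_of_trivial, ← star_eq_conjTranspose]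
    simp [Matrix.star_mul, star_star, star_eq_conjTranspose, diagonal_conjTranspose,
      Matrix.mul_assoc]
  constructor
  · rw [key, key]
    have : (fun i => d i * (d i)⁻¹ * d i) = d := by
      funext i; rcases eq_or_ne (d i) 0 with h | h <;> field_simp
    rw [this]
  refine ⟨?_, ?_, ?_⟩
  · rw [key, key]
    have : (fun i => (d i)⁻¹ * d i * (d i)⁻¹) = (fun i => (d i)⁻¹) := by
      funext i; rcases eq_or_ne (d i) 0 with h | h <;> field_simp
    rw [this]
  · rw [key, tkey]
  · rw [key, tkey]

/-- Approximation is transitive: if C ε-approximates B and B ε-approximates A,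
    then C is an ε(2+ε)-approximation of A. -/
theorem stmt14 {n : ℕ} (ε : ℝ) (A B C : Matrix (Fin n) (Fin n) ℝ)
    (hBC : IsApprox ε B C) (hAB : IsApprox ε A B) :
    IsApprox (ε * (2 + ε)) A C := by
  obtain ⟨hBpsd, hkerBC, hnBC⟩ := hBC
  obtain ⟨hApsd, hkerAB, hnAB⟩ := hAB
  refine ⟨hApsd, ?_, ?_⟩
  · -- kernel condition
    intro v hv
    obtain ⟨h1, h2⟩ := hkerAB v hv
    have hUBv : symmPart B *ᵥ v = 0 := by
      rw [symmPart_eq_add A B, add_mulVec, hv, smul_mulVec, add_mulVec, h1, h2]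
      simp
    obtain ⟨g1, g2⟩ := hkerBC v hUBv
    constructor
    · have hca : C - A = (C - B) + (B - A) := by abel
      rw [hca, add_mulVec, g1, h1, add_zero]
    · have hca : (C - A)ᵀ = (C - B)ᵀ + (B - A)ᵀ := by
        rw [← transpose_add]
        abel
      rw [hca, add_mulVec, g2, h2, add_zero]
  · -- norm condition
    intro R S hRpsd hRsq hMP
    have hRt : Rᵀ = R := by
      rw [← conjTranspose_eq_transpose_of_trivial]; exact hRpsd.isHermitian
    have hSt : Sᵀ = S := mp_symm hRt hMP
    have hE : ‖S * (B - A) * S‖ ≤ ε := hnAB R S hRpsd hRsq hMP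
    have hε : 0 ≤ ε := le_trans (norm_nonneg _) hE
    obtain ⟨m1, m2, m3, m4⟩ := hMP
    have hRS : R * S = S * R := by
      calc R * S = (R * S)ᵀ := m3.symm
      _ = Sᵀ * Rᵀ := transpose_mul _ _
      _ = S * R := by rw [hSt, hRt]
    have hPP : (S * R) * (S * R) = S * R := by
      calc (S * R) * (S * R) = S * (R * S * R) := by noncomm_ring
      _ = S * R := by rw [m1]
    have hPnorm : ‖S * R‖ ≤ 1 := by
      have h1 := l2_opNorm_conjTranspose_mul_self (S * R)
      rw [conjTranspose_eq_transpose_of_trivial, m4, hPP] at h1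
      nlinarith [norm_nonneg (S * R)]
    have hSUAS : S * symmPart A * S = S * R := by
      rw [← hRsq]
      calc S * (R * R) * S = (S * R) * (R * S) := by noncomm_ring
      _ = (S * R) * (S * R) := by rw [hRS]
      _ = S * R := hPP
    have hSEt : ‖S * (B - A)ᵀ * S‖ ≤ ε := by
      have h2 : S * (B - A)ᵀ * S = (S * (B - A) * S)ᵀ := by
        simp only [transpose_mul, hSt]; noncomm_ring
      rw [h2, l2norm_transpose]; exact hE
    have hUB : ‖S * symmPart B * S‖ ≤ 1 + ε := by
      have expand : S * symmPart B * S
          = (S * R) + (2⁻¹ : ℝ) • (S * (B - A) * S + S * (B - A)ᵀ * S) := by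
        rw [symmPart_eq_add A B, ← hSUAS]
        simp only [Matrix.add_mul, Matrix.mul_add, Matrix.smul_mul, Matrix.mul_smul, smul_add]
      rw [expand]
      calc ‖(S * R) + (2⁻¹ : ℝ) • (S * (B - A) * S + S * (B - A)ᵀ * S)‖
          ≤ ‖S * R‖ + ‖(2⁻¹ : ℝ) • (S * (B - A) * S + S * (B - A)ᵀ * S)‖ := norm_add_le _ _
      _ ≤ 1 + 2⁻¹ * (‖S * (B - A) * S‖ + ‖S * (B - A)ᵀ * S‖) := by
          rw [norm_smul, Real.norm_eq_abs]
          have hna := norm_add_le (S * (B - A) * S) (S * (B - A)ᵀ * S)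
          have h05 : |(2⁻¹ : ℝ)| = 2⁻¹ := by norm_num
          rw [h05]
          nlinarith
      _ ≤ 1 + ε := by linarith
    -- square root of U_B and its pseudoinverse
    set RB := (hBpsd.1.eigenvectorUnitary : Matrix (Fin n) (Fin n) ℝ) * diagonal (fun i => Real.sqrt (hBpsd.1.eigenvalues i)) * star (hBpsd.1.eigenvectorUnitary : Matrix (Fin n) (Fin n) ℝ) with hRBdef
    have hRBpsd : RB.PosSemidef := by
      rw [hRBdef, star_eq_conjTranspose]
      exact (PosSemidef.diagonal (fun i => Real.sqrt_nonneg _)).mul_mul_conjTranspose_same _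
    have hRBsq : RB * RB = symmPart B := by
      have hsp := hBpsd.1.spectral_theorem
      rw [Unitary.conjStarAlgAut_apply] at hsp
      have hU : star (hBpsd.1.eigenvectorUnitary : Matrix (Fin n) (Fin n) ℝ) * (hBpsd.1.eigenvectorUnitary : Matrix (Fin n) (Fin n) ℝ) = 1 := mem_unitaryGroup_iff'.mp hBpsd.1.eigenvectorUnitary.2
      rw [hRBdef]; conv_rhs => rw [hsp]
      calc _ = (hBpsd.1.eigenvectorUnitary : Matrix (Fin n) (Fin n) ℝ) * diagonal (fun i => Real.sqrt (hBpsd.1.eigenvalues i)) * (star (hBpsd.1.eigenvectorUnitary : Matrix (Fin n) (Fin n) ℝ) * (hBpsd.1.eigenvectorUnitary : Matrix (Fin n) (Fin n) ℝ)) * diagonal (fun i => Real.sqrt (hBpsd.1.eigenvalues i)) * star (hBpsd.1.eigenvectorUnitary : Matrix (Fin n) (Fin n) ℝ) := by simp only [Matrix.mul_assoc]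
      _ = _ := by
        rw [hU, Matrix.mul_one, Matrix.mul_assoc _ (diagonal _) (diagonal _), diagonal_mul_diagonal]
        congr 3
        funext i
        simp [Real.mul_self_sqrt (hBpsd.eigenvalues_nonneg i)]
    have hRBt : RBᵀ = RB := by
      rw [← conjTranspose_eq_transpose_of_trivial]; exact hRBpsd.isHermitian
    set V := (hBpsd.1.eigenvectorUnitary : Matrix (Fin n) (Fin n) ℝ) with hVdef
    have hV1 : star V * V = 1 := mem_unitaryGroup_iff'.mp hBpsd.1.eigenvectorUnitary.2
    set SB := V * diagonal (fun i => (Real.sqrt (hBpsd.1.eigenvalues i))⁻¹) * star V with hSBdef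
    have hRBform : RB = V * diagonal (fun i => Real.sqrt (hBpsd.1.eigenvalues i)) * star V := by
      rw [hRBdef]
    have hMPB : IsMoorePenrose RB SB := by
      rw [hRBform, hSBdef]; exact mp_unitary_diag V hV1 _
    have hSBt : SBᵀ = SB := mp_symm hRBt hMPB
    have hF : ‖SB * (C - B) * SB‖ ≤ ε := hnBC RB SB hRBpsd hRBsq hMPB
    obtain ⟨mb1, mb2, mb3, mb4⟩ := hMPB
    have hRSB : RB * SB = SB * RB := by
      calc RB * SB = (RB * SB)ᵀ := mb3.symm
      _ = SBᵀ * RBᵀ := transpose_mul _ _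
      _ = SB * RB := by rw [hSBt, hRBt]
    have hUBPB : symmPart B * (SB * RB) = symmPart B := by
      rw [← hRBsq]
      calc (RB * RB) * (SB * RB) = RB * (RB * SB * RB) := by noncomm_ring
      _ = RB * RB := by rw [mb1]
    have hker1 : (C - B) * (SB * RB) = C - B := by
      symm
      apply mulVec_ext'
      intro v
      have hw : symmPart B *ᵥ (v - (SB * RB) *ᵥ v) = 0 := by
        rw [mulVec_sub, mulVec_mulVec, hUBPB, sub_self]
      have hz := (hkerBC _ hw).1
      rw [mulVec_sub, mulVec_mulVec, sub_eq_zero] at hz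
      exact hz
    have hker2 : (C - B)ᵀ * (SB * RB) = (C - B)ᵀ := by
      symm
      apply mulVec_ext'
      intro v
      have hw : symmPart B *ᵥ (v - (SB * RB) *ᵥ v) = 0 := by
        rw [mulVec_sub, mulVec_mulVec, hUBPB, sub_self]
      have hz := (hkerBC _ hw).2
      rw [mulVec_sub, mulVec_mulVec, sub_eq_zero] at hz
      exact hz
    have hPBF : (SB * RB) * (C - B) = C - B := by
      calc (SB * RB) * (C - B) = ((C - B)ᵀ * (SB * RB)ᵀ)ᵀ := by
            simp only [transpose_mul, transpose_transpose]
      _ = ((C - B)ᵀ * (SB * RB))ᵀ := by rw [mb4]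
      _ = C - B := by rw [hker2, transpose_transpose]
    have hFdecomp : C - B = RB * (SB * (C - B) * SB) * RB := by
      calc C - B = (SB * RB) * (C - B) := hPBF.symm
      _ = (SB * RB) * ((C - B) * (SB * RB)) := by rw [hker1]
      _ = (RB * SB) * ((C - B) * (SB * RB)) := by rw [hRSB]
      _ = RB * (SB * (C - B) * SB) * RB := by noncomm_ring
    have key : S * (C - B) * S = (S * RB) * (SB * (C - B) * SB) * (RB * S) := by
      conv_lhs => rw [hFdecomp]
      noncomm_ring
    have hTRB : ‖RB * S‖ * ‖RB * S‖ ≤ 1 + ε := by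
      have h1 := l2_opNorm_conjTranspose_mul_self (RB * S)
      have h2 : (RB * S)ᴴ * (RB * S) = S * symmPart B * S := by
        rw [conjTranspose_eq_transpose_of_trivial, transpose_mul, hSt, hRBt, ← hRBsq]
        noncomm_ring
      rw [h2] at h1
      rw [← h1]
      exact hUB
    have hSRBeq : ‖S * RB‖ = ‖RB * S‖ := by
      calc ‖S * RB‖ = ‖(RB * S)ᵀ‖ := by rw [transpose_mul, hSt, hRBt]
      _ = ‖RB * S‖ := l2norm_transpose _
    have h3 : ‖S * (C - B) * S‖ ≤ (1 + ε) * ε := by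
      rw [key]
      calc ‖(S * RB) * (SB * (C - B) * SB) * (RB * S)‖
          ≤ ‖(S * RB) * (SB * (C - B) * SB)‖ * ‖RB * S‖ := l2_opNorm_mul _ _
      _ ≤ ‖S * RB‖ * ‖SB * (C - B) * SB‖ * ‖RB * S‖ :=
          mul_le_mul_of_nonneg_right (l2_opNorm_mul _ _) (norm_nonneg _)
      _ ≤ (1 + ε) * ε := by
          rw [hSRBeq]
          nlinarith [norm_nonneg (RB * S), norm_nonneg (SB * (C - B) * SB), hF, hTRB, hε]
    have decomp : S * (C - A) * S = S * (B - A) * S + S * (C - B) * S := by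
      have hCA : C - A = (B - A) + (C - B) := by abel
      rw [hCA]
      noncomm_ring
    show ‖S * (C - A) * S‖ ≤ ε * (2 + ε)
    rw [decomp]
    calc ‖S * (B - A) * S + S * (C - B) * S‖
        ≤ ‖S * (B - A) * S‖ + ‖S * (C - B) * S‖ := norm_add_le _ _
    _ ≤ ε + (1 + ε) * ε := add_le_add hE h3
    _ = ε * (2 + ε) := by ring
end
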